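/- Let v, w ∈ R^{2n} with ṽ = v^T ψ_n and w̃ = w^T ψ_n. If f ∈ R and w̃ · v = 0 (equivalently ṽ · w = 0), then Id_{2n} + f(v w̃ + w ṽ) lies in Sp_{2n}(R). -/

import Mathlib

namespace SympMonoid

/-- The permutation σ = (1,2)(3,4)⋯(2n-1,2n), in 0-based indexing on `Fin (2*n)`. -/
def sgm (n : ℕ) (i : Fin (2 * n)) : Fin (2 * n) :=
  if _h : i.val % 2 = 0 then ⟨i.val + 1, by have := i.isLt; omega⟩
  else ⟨i.val - 1, by have := i.isLt; omega⟩

/-- The standard alternating form matrix ψₙ = diag(ψ₁,…,ψ₁) with ψ₁ = [[0,1],[-1,0]]. -/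
def Psi (R : Type*) [CommRing R] (n : ℕ) : Matrix (Fin (2 * n)) (Fin (2 * n)) R :=
  Matrix.of fun i j =>
    if i.val % 2 = 0 ∧ j.val = i.val + 1 then (1 : R)
    else if i.val % 2 = 1 ∧ j.val + 1 = i.val then (-1 : R) else 0

/-- The elementary symplectic matrix se_{ij}(λ) = Id + λ e_{ij} − (−1)^{i+j} λ e_{σ(j)σ(i)}. -/
def se (R : Type*) [CommRing R] (n : ℕ) (i j : Fin (2 * n)) (lam : R) :
    Matrix (Fin (2 * n)) (Fin (2 * n)) R :=
  1 + Matrix.single i j lam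
    - Matrix.single (sgm n j) (sgm n i) ((-1 : R) ^ (i.val + j.val) * lam)

end SympMonoid

open SympMonoid Matrix

/-!
Write `M = v w̃ + w ṽ`. Only the alternating property `ũ u = 0` of `ψₙ` matters. It makes
`ψₙ` skew, so `Mᵀ ψₙ = -ψₙ M`, i.e. `M` lies in the symplectic Lie algebra; and together with
`w̃ v = 0` it kills all four products in `M² = (w̃ v) v w̃ + (ṽ v) v ṽ + (w̃ w) w w̃ + (ṽ w) w ṽ`.
For any such square-zero `N`, `(1 + N)ᵀ ψ (1 + N) = ψ (1 - N)(1 + N) = ψ`, and `1 + N` is a unit.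
-/

namespace Matrix

variable {ι R : Type*} [Fintype ι] [CommRing R] {J N : Matrix ι ι R}

theorem dotProduct_vecMul_comm_of_alt (hJ : ∀ u, u ᵥ* J ⬝ᵥ u = 0) (u x : ι → R) :
    x ᵥ* J ⬝ᵥ u = -(u ᵥ* J ⬝ᵥ x) := by
  have h := hJ (u + x)
  simp only [add_vecMul, add_dotProduct, dotProduct_add, hJ u, hJ x] at h
  linear_combination h

theorem mulVec_eq_neg_vecMul_of_alt (hJ : ∀ u, u ᵥ* J ⬝ᵥ u = 0) (u : ι → R) :
    J *ᵥ u = -(u ᵥ* J) := by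
  classical
  ext i
  simpa [single_one_vecMul, dotProduct_single_one, mulVec, row] using
    dotProduct_vecMul_comm_of_alt hJ u (Pi.single i 1)

theorem transpose_mul_eq_neg_mul_of_alt (hJ : ∀ u, u ᵥ* J ⬝ᵥ u = 0) (v w : ι → R) :
    (vecMulVec v (w ᵥ* J) + vecMulVec w (v ᵥ* J))ᵀ * J =
      -(J * (vecMulVec v (w ᵥ* J) + vecMulVec w (v ᵥ* J))) := by
  rw [transpose_add, transpose_vecMulVec, transpose_vecMulVec, add_mul, vecMulVec_mul,
    vecMulVec_mul, mul_add, mul_vecMulVec, mul_vecMulVec, mulVec_eq_neg_vecMul_of_alt hJ,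
    mulVec_eq_neg_vecMul_of_alt hJ, neg_vecMulVec, neg_vecMulVec]
  abel

theorem mul_self_eq_zero_of_alt (hJ : ∀ u, u ᵥ* J ⬝ᵥ u = 0) {v w : ι → R}
    (hvw : w ᵥ* J ⬝ᵥ v = 0) :
    (vecMulVec v (w ᵥ* J) + vecMulVec w (v ᵥ* J)) *
      (vecMulVec v (w ᵥ* J) + vecMulVec w (v ᵥ* J)) = 0 := by
  have hwv : v ᵥ* J ⬝ᵥ w = 0 := by rw [dotProduct_vecMul_comm_of_alt hJ, hvw, neg_zero]
  simp only [add_mul, mul_add, vecMulVec_mul_vecMulVec, hvw, hwv, hJ, zero_smul,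
    vecMulVec_zero, add_zero]

theorem transpose_one_add_mul_mul_one_add [DecidableEq ι] (hlie : Nᵀ * J = -(J * N)) (hsq : N * N = 0) :
    (1 + N)ᵀ * J * (1 + N) = J := by
  have hleft : (1 + N)ᵀ * J = J * (1 - N) := by
    rw [transpose_add, transpose_one, add_mul, one_mul, hlie, mul_sub, mul_one, sub_eq_add_neg]
  rw [hleft, Matrix.mul_assoc, sub_mul, mul_add, mul_add, hsq]
  simp

end Matrix

namespace SympMonoid

variable (n : ℕ)

theorem sgm_val (j : Fin (2 * n)) :
    (sgm n j).val = if j.val % 2 = 0 then j.val + 1 else j.val - 1 := by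
  unfold sgm; split_ifs <;> rfl

theorem sgm_sgm (j : Fin (2 * n)) : sgm n (sgm n j) = j := by
  apply Fin.ext
  rw [sgm_val, sgm_val]
  have := j.isLt
  split_ifs <;> omega

theorem sgm_ne (j : Fin (2 * n)) : sgm n j ≠ j := by
  intro h
  have := congrArg Fin.val h
  rw [sgm_val] at this
  split_ifs at this <;> omega

variable (R : Type*) [CommRing R]

theorem Psi_apply (i j : Fin (2 * n)) :
    Psi R n i j = if i.val % 2 = 0 ∧ j.val = i.val + 1 then (1 : R)
      else if i.val % 2 = 1 ∧ j.val + 1 = i.val then (-1 : R) else 0 := rfl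

theorem Psi_apply_eq_zero {i j : Fin (2 * n)} (h : i ≠ sgm n j) : Psi R n i j = 0 := by
  have hv : i.val ≠ (sgm n j).val := fun e => h (Fin.ext e)
  rw [sgm_val] at hv
  rw [Psi_apply]
  split_ifs at hv ⊢ <;> first | rfl | omega

theorem Psi_sgm_apply (j : Fin (2 * n)) :
    Psi R n (sgm n j) j = if j.val % 2 = 1 then (1 : R) else -1 := by
  rw [Psi_apply]
  have hs := sgm_val n j
  have := j.isLt
  split_ifs at hs ⊢ <;> first | rfl | omega

theorem vecMul_Psi_apply (u : Fin (2 * n) → R) (j : Fin (2 * n)) :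
    (u ᵥ* Psi R n) j = if j.val % 2 = 1 then u (sgm n j) else -u (sgm n j) := by
  rw [vecMul, dotProduct, Fintype.sum_eq_single (sgm n j)
    fun i hi => by rw [Psi_apply_eq_zero n R hi, mul_zero], Psi_sgm_apply]
  split_ifs <;> ring

/-- The coordinates `j` and `σ j` contribute `± u (σ j) u j` with opposite signs. -/
theorem dotProduct_vecMul_Psi_self (u : Fin (2 * n) → R) : u ᵥ* Psi R n ⬝ᵥ u = 0 := by
  refine Finset.sum_ninvolution (sgm n) (fun j => ?_) (fun j _ => sgm_ne n j)
    (fun _ => Finset.mem_univ _) (sgm_sgm n)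
  rw [vecMul_Psi_apply, vecMul_Psi_apply, sgm_sgm]
  have hs := sgm_val n j
  have := j.isLt
  split_ifs at hs ⊢ <;> first | ring1 | omega

end SympMonoid

/-- If w̃·v = 0 then Id + f(v w̃ + w ṽ) ∈ Sp_{2n}(R), where ũ = uᵀψₙ. -/
theorem symplectic_double_transvection_mem (R : Type*) [CommRing R] (n : ℕ)
    (v w : Fin (2 * n) → R) (f : R)
    (hvw : Matrix.vecMul w (Psi R n) ⬝ᵥ v = 0) :
    IsUnit (1 + f • (Matrix.vecMulVec v (Matrix.vecMul w (Psi R n)) +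
        Matrix.vecMulVec w (Matrix.vecMul v (Psi R n)))) ∧
    (1 + f • (Matrix.vecMulVec v (Matrix.vecMul w (Psi R n)) +
        Matrix.vecMulVec w (Matrix.vecMul v (Psi R n))))ᵀ * Psi R n *
      (1 + f • (Matrix.vecMulVec v (Matrix.vecMul w (Psi R n)) +
        Matrix.vecMulVec w (Matrix.vecMul v (Psi R n)))) = Psi R n := by
  have hJ := dotProduct_vecMul_Psi_self n R
  set M := vecMulVec v (w ᵥ* Psi R n) + vecMulVec w (v ᵥ* Psi R n)
  have hsq : f • M * f • M = 0 := by
    rw [smul_mul_smul_comm, mul_self_eq_zero_of_alt hJ hvw, smul_zero]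
  have hlie : (f • M)ᵀ * Psi R n = -(Psi R n * f • M) := by
    rw [transpose_smul, Matrix.smul_mul, Matrix.mul_smul, transpose_mul_eq_neg_mul_of_alt hJ,
      smul_neg]
  exact ⟨IsNilpotent.isUnit_one_add ⟨2, by rw [pow_two, hsq]⟩,
    transpose_one_add_mul_mul_one_add hlie hsq⟩
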